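/- arXiv:2211.12319 — 2 statements merged into one kernel-verified Lean document; each statement's English description precedes it below -/
import Mathlib

section
/- Every restriction-closed property of d-way tensors over a finite field that satisfies the descending chain condition on restriction-closed properties is characterised by finitely many forbidden restrictions: for every restriction-closed property X there exist finitely many tensors T₁, ..., T_k (T_i ∈ V_i^⊗d) such that X = ⋂_{i=1}^k X_{⊁ T_i}, where X_{⊁ T_i} is the property of not having T_i as a restriction. -/
open scoped TensorProduct

/-- The space of `d`-way tensors on `K^n`. -/
abbrev Tens (K : Type) [Field K] (d n : ℕ) : Type := ⨂[K] (_ : Fin d), (Fin n → K)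

/-- The map `φ^{⊗d}` induced on `d`-way tensors by a linear map `φ`. -/
noncomputable def tmap (K : Type) [Field K] (d : ℕ) {m n : ℕ}
    (φ : (Fin m → K) →ₗ[K] (Fin n → K)) : Tens K d m →ₗ[K] Tens K d n :=
  PiTensorProduct.map (fun _ => φ)

/-- `Restricts K d S T` means `T` is a restriction of `S`, i.e. `S ⪰ T`. -/
def Restricts (K : Type) [Field K] (d : ℕ) {m n : ℕ}
    (S : Tens K d m) (T : Tens K d n) : Prop :=
  ∃ φ : (Fin m → K) →ₗ[K] (Fin n → K), tmap K d φ S = T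

/-- A restriction-closed property of `d`-way tensors. -/
def RClosed (K : Type) [Field K] (d : ℕ) (X : ∀ n : ℕ, Set (Tens K d n)) : Prop :=
  ∀ (m n : ℕ) (φ : (Fin m → K) →ₗ[K] (Fin n → K)), ∀ S ∈ X m, tmap K d φ S ∈ X n

/-!
A property `X` is contained in the property `forbid L` of avoiding every tensor of a finite list
`L` whose members all lie outside `X`. By the descending chain condition some such `forbid L` is
minimal among those containing `X`; if it still contained a tensor `T ∉ X`, forbidding `T` as
well would give a strictly smaller one, since `T` restricts to itself.
-/

section

variable {K : Type} [Field K] {d : ℕ}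

lemma tmap_id (n : ℕ) : tmap K d (LinearMap.id : (Fin n → K) →ₗ[K] (Fin n → K)) = LinearMap.id :=
  PiTensorProduct.map_id

lemma tmap_comp {m n p : ℕ} (ψ : (Fin n → K) →ₗ[K] (Fin p → K))
    (φ : (Fin m → K) →ₗ[K] (Fin n → K)) : tmap K d (ψ ∘ₗ φ) = tmap K d ψ ∘ₗ tmap K d φ :=
  PiTensorProduct.map_comp _ _

lemma restricts_refl {n : ℕ} (S : Tens K d n) : Restricts K d S S :=
  ⟨LinearMap.id, by rw [tmap_id]; rfl⟩

lemma restricts_of_restricts_tmap {m n p : ℕ} (φ : (Fin m → K) →ₗ[K] (Fin n → K))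
    {S : Tens K d m} {T : Tens K d p} : Restricts K d (tmap K d φ S) T → Restricts K d S T :=
  fun ⟨ψ, hψ⟩ => ⟨ψ ∘ₗ φ, by rwa [tmap_comp]⟩

variable (K d) in
def forbid (L : List (Σ n : ℕ, Tens K d n)) : ∀ n : ℕ, Set (Tens K d n) :=
  fun _ => {S | ∀ t ∈ L, ¬ Restricts K d S t.2}

lemma rclosed_forbid (L : List (Σ n : ℕ, Tens K d n)) : RClosed K d (forbid K d L) :=
  fun _ _ φ _ hS t ht hres => hS t ht (restricts_of_restricts_tmap φ hres)

lemma forbid_cons_le (t : Σ n : ℕ, Tens K d n) (L : List (Σ n : ℕ, Tens K d n)) :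
    forbid K d (t :: L) ≤ forbid K d L :=
  fun _ _ hS s hs => hS s (List.mem_cons_of_mem _ hs)

lemma not_mem_forbid_cons (t : Σ n : ℕ, Tens K d n) (L : List (Σ n : ℕ, Tens K d n)) :
    t.2 ∉ forbid K d (t :: L) t.1 :=
  fun h => h t List.mem_cons_self (restricts_refl t.2)

lemma le_forbid_cons {X : ∀ n : ℕ, Set (Tens K d n)} (hX : RClosed K d X)
    {t : Σ n : ℕ, Tens K d n} (ht : t.2 ∉ X t.1) {L : List (Σ n : ℕ, Tens K d n)}
    (hL : X ≤ forbid K d L) : X ≤ forbid K d (t :: L) := by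
  intro n S hS s hs ⟨φ, hφ⟩
  rcases List.mem_cons.mp hs with rfl | hs
  · exact ht (hφ ▸ hX _ _ φ S hS)
  · exact hL n hS s hs ⟨φ, hφ⟩

lemma mem_forbid_iff {L : List (Σ n : ℕ, Tens K d n)} {n : ℕ} {S : Tens K d n} :
    S ∈ forbid K d L n ↔ ∀ i : Fin L.length, ¬ Restricts K d S (L.get i).2 :=
  List.forall_mem_iff_get

variable (K d) in
abbrev RClosedProperty : Type := {X : ∀ n : ℕ, Set (Tens K d n) // RClosed K d X}

lemma wellFoundedLT_rclosedProperty
    (hdcc : ∀ X : ℕ → ∀ n : ℕ, Set (Tens K d n),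
      (∀ i, RClosed K d (X i)) →
      (∀ i n, X (i + 1) n ⊆ X i n) →
      ∃ N : ℕ, ∀ i, N ≤ i → ∀ n, X i n = X N n) :
    WellFoundedLT (RClosedProperty K d) := by
  refine (wellFoundedGT_iff_monotone_chain_condition (α := (RClosedProperty K d)ᵒᵈ)).2 fun a => ?_
  have hanti : ∀ i n, (a (i + 1)).1 n ⊆ (a i).1 n := fun i => a.mono (Nat.le_succ i)
  obtain ⟨N, hN⟩ := hdcc (fun i => (a i).1) (fun i => (a i).2) hanti
  exact ⟨N, fun m hm => Subtype.ext (funext (hN m hm)).symm⟩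

lemma exists_forbid_eq [WellFoundedLT (RClosedProperty K d)]
    {X : ∀ n : ℕ, Set (Tens K d n)} (hX : RClosed K d X) :
    ∃ L : List (Σ n : ℕ, Tens K d n), X = forbid K d L := by
  let f : List (Σ n : ℕ, Tens K d n) → RClosedProperty K d := fun L => ⟨_, rclosed_forbid L⟩
  obtain ⟨L, hXL, hmin⟩ := (InvImage.wf f wellFounded_lt).has_min {L | X ≤ forbid K d L}
    ⟨[], fun _ _ _ _ ht => nomatch ht⟩
  refine ⟨L, le_antisymm hXL fun n S hS => ?_⟩
  by_contra hSX
  refine hmin (⟨n, S⟩ :: L) (le_forbid_cons hX hSX hXL) (lt_of_le_not_ge (forbid_cons_le _ L) ?_)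
  exact fun hle => not_mem_forbid_cons ⟨n, S⟩ L (hle n hS)

end

theorem stmt4_general (K : Type) [Field K] (d : ℕ)
    (hdcc : ∀ X : ℕ → ∀ n : ℕ, Set (Tens K d n),
      (∀ i, RClosed K d (X i)) →
      (∀ i n, X (i + 1) n ⊆ X i n) →
      ∃ N : ℕ, ∀ i, N ≤ i → ∀ n, X i n = X N n) :
    ∀ X : ∀ n : ℕ, Set (Tens K d n), RClosed K d X →
      ∃ (k : ℕ) (dims : Fin k → ℕ) (T : ∀ i : Fin k, Tens K d (dims i)),
        ∀ (n : ℕ) (S : Tens K d n), S ∈ X n ↔ ∀ i : Fin k, ¬ Restricts K d S (T i) := by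
  intro X hX
  have := wellFoundedLT_rclosedProperty hdcc
  obtain ⟨L, rfl⟩ := exists_forbid_eq hX
  exact ⟨L.length, fun i => (L.get i).1, fun i => (L.get i).2, fun _ _ => mem_forbid_iff⟩

/-- If restriction-closed properties of `d`-way tensors over the finite field `K` satisfy the
descending chain condition, then every restriction-closed property is characterised by
finitely many forbidden restrictions: `X = ⋂_{i=1}^k X_{⊁ T_i}`. -/
theorem stmt4 (K : Type) [Field K] [Fintype K] (d : ℕ) (hd : 1 ≤ d)
    (hdcc : ∀ X : ℕ → ∀ n : ℕ, Set (Tens K d n),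
      (∀ i, RClosed K d (X i)) →
      (∀ i n, X (i + 1) n ⊆ X i n) →
      ∃ N : ℕ, ∀ i, N ≤ i → ∀ n, X i n = X N n) :
    ∀ X : ∀ n : ℕ, Set (Tens K d n), RClosed K d X →
      ∃ (k : ℕ) (dims : Fin k → ℕ) (T : ∀ i : Fin k, Tens K d (dims i)),
        ∀ (n : ℕ) (S : Tens K d n), S ∈ X n ↔ ∀ i : Fin k, ¬ Restricts K d S (T i) :=
  stmt4_general K d hdcc
end

section
/- Let P be a polynomial generic representation of degree d ≥ 0 over a finite field K and U a finite-dimensional K-vector space. Then the top-degree part is invariant under shifting: (Sh_U P)_{>d−1} ≅ P_{>d−1}, where Sh_U P is the representation V ↦ P(U ⊕ V). Moreover Sh_U P decomposes as the direct sum of a copy of P (via P(ι_V) for the inclusion ι_V: V → U ⊕ V) and the kernel Q of the projection-induced morphism Sh_U P → P, and Q has degree at most d − 1. -/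
/-- A generic representation over `K`, presented on the skeleton `n ↦ K^n` of the category
of finite-dimensional `K`-vector spaces: a functor `Vec → Vec`. -/
structure GenRep (K : Type) [Field K] where
  obj : ℕ → Type
  [addcg : ∀ n, AddCommGroup (obj n)]
  [mod : ∀ n, Module K (obj n)]
  map : ∀ {m n : ℕ}, ((Fin m → K) →ₗ[K] (Fin n → K)) → (obj m →ₗ[K] obj n)
  map_id : ∀ n : ℕ, map (LinearMap.id : (Fin n → K) →ₗ[K] (Fin n → K)) = LinearMap.id
  map_comp : ∀ {m n p : ℕ} (φ : (Fin m → K) →ₗ[K] (Fin n → K))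
    (ψ : (Fin n → K) →ₗ[K] (Fin p → K)), map (ψ ∘ₗ φ) = map ψ ∘ₗ map φ

attribute [instance] GenRep.addcg GenRep.mod

variable {K : Type} [Field K]

/-- `f : (α → K) → W` is (given by) a polynomial of (total) degree at most `e` in the
coordinates, with coefficients in the `K`-module `W`.  For `e = -1` this forces `f = 0`. -/
def PolyDeg (K : Type) [Field K] {α : Type} [Fintype α] {W : Type} [AddCommGroup W]
    [Module K W] (e : ℤ) (f : (α → K) → W) : Prop :=
  ∃ (s : Finset (α →₀ ℕ)) (c : (α →₀ ℕ) → W),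
    (∀ m ∈ s, ((m.sum fun _ k => k : ℕ) : ℤ) ≤ e) ∧
    ∀ x : α → K, f x = ∑ m ∈ s, (∏ a ∈ m.support, x a ^ m a) • c m

/-- A generic representation has degree at most `e` if all its maps
`Hom(K^m, K^n) → Hom(P(K^m), P(K^n))` are polynomial of degree `≤ e` in the matrix entries. -/
def GenRep.HasDegLE (P : GenRep K) (e : ℤ) : Prop :=
  ∀ m n : ℕ, PolyDeg K e (fun x : Fin n × Fin m → K =>
    P.map ((Matrix.of fun i j => x (i, j)).mulVecLin))

/-- A generic representation is polynomial if it has some finite degree. -/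
def GenRep.IsPoly (P : GenRep K) : Prop := ∃ e : ℤ, P.HasDegLE e

/-- `P` has degree exactly `d`. -/
def GenRep.IsDegree (P : GenRep K) (d : ℤ) : Prop :=
  P.HasDegLE d ∧ ∀ e : ℤ, P.HasDegLE e → d ≤ e

/-- A subrepresentation of a generic representation. -/
structure SubRep (P : GenRep K) where
  carrier : ∀ n : ℕ, Submodule K (P.obj n)
  stable : ∀ {m n : ℕ} (φ : (Fin m → K) →ₗ[K] (Fin n → K)),
    ∀ x ∈ carrier m, P.map φ x ∈ carrier n

/-- The quotient representation `P/N` has degree at most `e`; expressed via the composites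
`mkQ ∘ P(φ)`, which present the maps of `P/N`. -/
def QuotDegLE (P : GenRep K) (N : SubRep P) (e : ℤ) : Prop :=
  ∀ m n : ℕ, PolyDeg K e (fun x : Fin n × Fin m → K =>
    (N.carrier n).mkQ ∘ₗ P.map ((Matrix.of fun i j => x (i, j)).mulVecLin))

/-- `N` is the top part `P_{>e}`: the inclusion-wise minimal subrepresentation of `P` whose
quotient has degree at most `e`. -/
def IsTopPart (P : GenRep K) (e : ℤ) (N : SubRep P) : Prop :=
  QuotDegLE P N e ∧ ∀ N' : SubRep P, QuotDegLE P N' e → ∀ n, N.carrier n ≤ N'.carrier n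

/-- A morphism (natural transformation) of generic representations. -/
structure RepHom (P Q : GenRep K) where
  app : ∀ n : ℕ, P.obj n →ₗ[K] Q.obj n
  natural : ∀ {m n : ℕ} (φ : (Fin m → K) →ₗ[K] (Fin n → K)),
    app n ∘ₗ P.map φ = Q.map φ ∘ₗ app m

/-- The canonical identification `K^{u+n} ≅ K^u × K^n`. -/
noncomputable def sumEquiv (K : Type) [Field K] (u n : ℕ) :
    (Fin (u + n) → K) ≃ₗ[K] (Fin u → K) × (Fin n → K) :=
  (LinearEquiv.funCongrLeft K K finSumFinEquiv).trans
    (LinearEquiv.sumArrowLequivProdArrow _ _ K K)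

/-- The map `id_U ⊕ φ : U ⊕ V → U ⊕ W` on the skeleton. -/
noncomputable def dsum (K : Type) [Field K] (u : ℕ) {m n : ℕ}
    (φ : (Fin m → K) →ₗ[K] (Fin n → K)) : (Fin (u + m) → K) →ₗ[K] (Fin (u + n) → K) :=
  (sumEquiv K u n).symm.toLinearMap ∘ₗ (LinearMap.prodMap LinearMap.id φ) ∘ₗ
    (sumEquiv K u m).toLinearMap

/-- The inclusion `ι_V : V → U ⊕ V`, `v ↦ 0 + v`. -/
noncomputable def incl (K : Type) [Field K] (u n : ℕ) :
    (Fin n → K) →ₗ[K] (Fin (u + n) → K) :=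
  (sumEquiv K u n).symm.toLinearMap ∘ₗ LinearMap.inr K (Fin u → K) (Fin n → K)

/-- The projection `π_V : U ⊕ V → V`. -/
noncomputable def projV (K : Type) [Field K] (u n : ℕ) :
    (Fin (u + n) → K) →ₗ[K] (Fin n → K) :=
  LinearMap.snd K (Fin u → K) (Fin n → K) ∘ₗ (sumEquiv K u n).toLinearMap

/-- The shift `Sh_U P : V ↦ P(U ⊕ V)` of a generic representation. -/
noncomputable def GenRep.shift (P : GenRep K) (u : ℕ) : GenRep K where
  obj n := P.obj (u + n)
  map φ := P.map (dsum K u φ)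
  map_id n := by
    show P.map (dsum K u LinearMap.id) = LinearMap.id
    rw [show dsum K u (LinearMap.id : (Fin n → K) →ₗ[K] _) = LinearMap.id by
      ext x; simp [dsum]]
    exact P.map_id _
  map_comp φ ψ := by
    show P.map (dsum K u (ψ ∘ₗ φ)) = P.map (dsum K u ψ) ∘ₗ P.map (dsum K u φ)
    rw [show dsum K u (ψ ∘ₗ φ) = dsum K u ψ ∘ₗ dsum K u φ by ext x; simp [dsum]]
    exact P.map_comp _ _

/-!
The inclusion `ι : V → U ⊕ V` and the projection `π : U ⊕ V → V` give morphisms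
`α = P(ι) : P → Sh_U P` and `β = P(π) : Sh_U P → P` with `β ∘ α = id`, so
`Sh_U P = im α ⊕ ker β`. On `ker β` the map `(Sh_U P)(X) = P(1 ⊕ X)` agrees with
`P(1 ⊕ X) - P(0 ⊕ X)`, since `0 ⊕ X` factors through `π`. Writing `P(Y)` as a polynomial of
degree `≤ d` in the entries of `Y`, the monomials involving only the `X`-block cancel in this
difference, and every other monomial has had at least one variable replaced by a constant; so
`ker β` has degree `≤ d - 1`. Consequently `Sh_U P / α(N)` has degree `≤ d - 1` whenever `P / N`
does, giving `(Sh_U P)_{>d-1} ⊆ α(P_{>d-1})`; conversely `P / α⁻¹(M)` embeds into `Sh_U P / M`,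
giving `P_{>d-1} ⊆ α⁻¹((Sh_U P)_{>d-1})`.
-/

namespace Finsupp

open Function

variable {ι γ M : Type} [CommMonoid M] {ρ : ι → γ} [DecidablePred (· ∈ Set.range ρ)]

lemma prod_extend_pow (hρ : Injective ρ) (μ : γ →₀ ℕ) (x : ι → M) (c : γ → M) :
    ∏ g ∈ μ.support, extend ρ x c g ^ μ g =
      (∏ a ∈ (μ.comapDomain ρ hρ.injOn).support, x a ^ μ.comapDomain ρ hρ.injOn a) *
        ∏ g ∈ μ.support with g ∉ Set.range ρ, c g ^ μ g := by
  rw [← Finset.prod_filter_mul_prod_filter_not μ.support (· ∈ Set.range ρ)]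
  congr 1
  · rw [comapDomain_support, ← Finset.prod_preimage' ρ _ hρ.injOn]
    simp [hρ.extend_apply]
  · refine Finset.prod_congr rfl fun g hg => ?_
    rw [extend_apply' _ _ _ (by simpa using (Finset.mem_filter.1 hg).2)]

lemma sum_comapDomain_add_sum_compl_range (hρ : Injective ρ) (μ : γ →₀ ℕ) :
    ((μ.comapDomain ρ hρ.injOn).sum fun _ k => k) +
        ∑ g ∈ μ.support with g ∉ Set.range ρ, μ g = μ.sum fun _ k => k := by
  rw [sum, comapDomain_support]
  simp only [comapDomain_apply]
  rw [Finset.sum_preimage', sum, Finset.sum_filter_add_sum_filter_not]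

end Finsupp

namespace LinearMap

variable {R M N : Type} [Ring R] [AddCommGroup M] [Module R M] [AddCommGroup N] [Module R N]

lemma isCompl_range_ker_of_comp_eq_id {f : M →ₗ[R] N} {g : N →ₗ[R] M} (h : g ∘ₗ f = id) :
    IsCompl (range f) (ker g) := by
  have hf : ker f = ⊥ := ker_eq_bot_of_inverse h
  have hproj : ∀ y : range f, (f.rangeRestrict ∘ₗ g) y = y := by
    rintro ⟨_, x, rfl⟩
    ext
    simp [← comp_apply g f, h]
  convert isCompl_of_proj hproj using 1
  rw [ker_comp, ker_rangeRestrict, hf]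
  rfl

end LinearMap

namespace PolyDeg

variable {ι W W' : Type} [Fintype ι] [AddCommGroup W] [Module K W] [AddCommGroup W'] [Module K W']
  {e : ℤ}

lemma zero : PolyDeg K e (fun _ : ι → K => (0 : W)) :=
  ⟨∅, 0, by simp, by simp⟩

lemma monomial (ν : ι →₀ ℕ) (hν : ((ν.sum fun _ k => k : ℕ) : ℤ) ≤ e) (w : W) :
    PolyDeg K e (fun x : ι → K => (∏ a ∈ ν.support, x a ^ ν a) • w) :=
  ⟨{ν}, fun _ => w, fun m hm => by rwa [Finset.mem_singleton.1 hm], by simp⟩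

lemma congr {f g : (ι → K) → W} (hf : PolyDeg K e f) (h : ∀ x, f x = g x) : PolyDeg K e g :=
  funext h ▸ hf

lemma add {f g : (ι → K) → W} (hf : PolyDeg K e f) (hg : PolyDeg K e g) :
    PolyDeg K e (fun x => f x + g x) := by
  classical
  obtain ⟨s, c, hs, hfc⟩ := hf
  obtain ⟨t, b, ht, hgb⟩ := hg
  refine ⟨s ∪ t, fun m => (if m ∈ s then c m else 0) + (if m ∈ t then b m else 0), ?_, ?_⟩
  · intro m hm
    rcases Finset.mem_union.1 hm with h | h
    exacts [hs m h, ht m h]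
  · intro x
    simp only [hfc, hgb, smul_add, smul_ite, smul_zero]
    rw [Finset.sum_add_distrib, Finset.sum_ite_mem, Finset.sum_ite_mem,
      Finset.union_inter_cancel_left, Finset.union_inter_cancel_right]

lemma sum {κ : Type} (t : Finset κ) {f : κ → (ι → K) → W} (hf : ∀ i ∈ t, PolyDeg K e (f i)) :
    PolyDeg K e (fun x => ∑ i ∈ t, f i x) := by
  classical
  induction t using Finset.induction_on with
  | empty => simpa using zero
  | insert i t hi ih =>
    simp only [Finset.sum_insert hi]
    exact add (hf i (Finset.mem_insert_self i t))
      (ih fun j hj => hf j (Finset.mem_insert_of_mem hj))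

lemma map {f : (ι → K) → W} (hf : PolyDeg K e f) (g : W →ₗ[K] W') :
    PolyDeg K e (fun x => g (f x)) := by
  obtain ⟨s, c, hs, hfc⟩ := hf
  exact ⟨s, fun m => g (c m), hs, fun x => by simp [hfc]⟩

section Hom

variable {V₀ V₁ V₂ V₃ : Type} [AddCommGroup V₀] [Module K V₀] [AddCommGroup V₁]
  [Module K V₁] [AddCommGroup V₂] [Module K V₂] [AddCommGroup V₃] [Module K V₃]
  {f : (ι → K) → V₁ →ₗ[K] V₂}

lemma comp_left (hf : PolyDeg K e f) (g : V₂ →ₗ[K] V₃) : PolyDeg K e (fun x => g ∘ₗ f x) :=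
  hf.map (LinearMap.llcomp K V₁ V₂ V₃ g)

lemma comp_right (hf : PolyDeg K e f) (h : V₀ →ₗ[K] V₁) : PolyDeg K e (fun x => f x ∘ₗ h) :=
  hf.map (LinearMap.lcomp K V₂ h)

end Hom

open Function in
lemma sub_extend_zero {γ : Type} [Fintype γ] {ρ : ι → γ} {d : ℕ} {F : (γ → K) → W}
    (hF : PolyDeg K d F) (hρ : Injective ρ) (c : γ → K) :
    PolyDeg K (d - 1) (fun x => F (extend ρ x c) - F (extend ρ x 0)) := by
  classical
  obtain ⟨s, w, hs, hFw⟩ := hF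
  simp only [hFw, ← Finset.sum_sub_distrib, ← sub_smul, Finsupp.prod_extend_pow hρ, ← mul_sub]
  refine sum s fun μ hμ => ?_
  by_cases hR : ∃ g ∈ μ.support, g ∉ Set.range ρ
  · obtain ⟨g, hg, hgR⟩ := hR
    have hzero : ∏ g ∈ μ.support with g ∉ Set.range ρ, (0 : γ → K) g ^ μ g = 0 :=
      Finset.prod_eq_zero (Finset.mem_filter.2 ⟨hg, hgR⟩)
        (zero_pow (Finsupp.mem_support_iff.1 hg))
    simp only [hzero, sub_zero, mul_smul]
    refine monomial _ ?_ _
    have hpos : 1 ≤ ∑ g ∈ μ.support with g ∉ Set.range ρ, μ g :=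
      (Nat.one_le_iff_ne_zero.2 (Finsupp.mem_support_iff.1 hg)).trans
        (Finset.single_le_sum (fun _ _ => Nat.zero_le _) (Finset.mem_filter.2 ⟨hg, hgR⟩))
    have hsplit := Finsupp.sum_comapDomain_add_sum_compl_range hρ μ
    have hμd := hs μ hμ
    omega
  · have hempty : {g ∈ μ.support | g ∉ Set.range ρ} = ∅ :=
      Finset.filter_eq_empty_iff.2 fun g hg hgR => hR ⟨g, hg, hgR⟩
    simpa only [hempty, Finset.prod_empty, sub_self, mul_zero, zero_smul] using zero

end PolyDeg

section Skeleton

variable (u : ℕ) {m n : ℕ}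

lemma projV_comp_incl : projV K u n ∘ₗ incl K u n = LinearMap.id := by
  ext x; simp [projV, incl]

lemma dsum_comp_incl (φ : (Fin m → K) →ₗ[K] (Fin n → K)) :
    dsum K u φ ∘ₗ incl K u m = incl K u n ∘ₗ φ := by
  ext x; simp [dsum, incl]

lemma projV_comp_dsum (φ : (Fin m → K) →ₗ[K] (Fin n → K)) :
    projV K u n ∘ₗ dsum K u φ = φ ∘ₗ projV K u m := by
  ext x; simp [dsum, projV]

noncomputable def dsumMatrix (A : Matrix (Fin u) (Fin u) K) (X : Matrix (Fin n) (Fin m) K) :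
    Matrix (Fin (u + n)) (Fin (u + m)) K :=
  Matrix.reindex finSumFinEquiv finSumFinEquiv (Matrix.fromBlocks A 0 0 X)

lemma mulVecLin_dsumMatrix (A : Matrix (Fin u) (Fin u) K) (X : Matrix (Fin n) (Fin m) K) :
    (dsumMatrix u A X).mulVecLin = (sumEquiv K u n).symm.toLinearMap ∘ₗ
      A.mulVecLin.prodMap X.mulVecLin ∘ₗ (sumEquiv K u m).toLinearMap := by
  refine LinearMap.ext fun v => funext fun i => ?_
  obtain ⟨j, rfl⟩ := finSumFinEquiv.surjective i
  rcases j with j | j <;>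
    simp [dsumMatrix, sumEquiv, Matrix.submatrix_mulVec_equiv, Matrix.fromBlocks_mulVec,
      LinearEquiv.sumArrowLequivProdArrow, LinearMap.funLeft, Function.comp_def,
      Equiv.sumArrowEquivProdArrow]

lemma mulVecLin_dsumMatrix_one (X : Matrix (Fin n) (Fin m) K) :
    (dsumMatrix u 1 X).mulVecLin = dsum K u X.mulVecLin := by
  rw [mulVecLin_dsumMatrix, Matrix.mulVecLin_one]
  rfl

lemma mulVecLin_dsumMatrix_zero (X : Matrix (Fin n) (Fin m) K) :
    (dsumMatrix u 0 X).mulVecLin = incl K u n ∘ₗ X.mulVecLin ∘ₗ projV K u m := by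
  rw [mulVecLin_dsumMatrix, Matrix.mulVecLin_zero]
  ext v
  simp [incl, projV]

open Function in
lemma of_extend_eq_dsumMatrix (A : Matrix (Fin u) (Fin u) K) (x : Fin n × Fin m → K) :
    Matrix.of (fun i j => extend (Prod.map (Fin.natAdd u) (Fin.natAdd u)) x
      (fun p => dsumMatrix u A 0 p.1 p.2) (i, j)) =
      dsumMatrix u A (Matrix.of fun i j => x (i, j)) := by
  have hρ : Injective (Prod.map (Fin.natAdd (m := n) u) (Fin.natAdd (m := m) u)) :=
    (Fin.natAdd_injective _ _).prodMap (Fin.natAdd_injective _ _)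
  ext i j
  rw [Matrix.of_apply]
  obtain ⟨i, rfl⟩ := finSumFinEquiv.surjective i
  obtain ⟨j, rfl⟩ := finSumFinEquiv.surjective j
  rcases i with i | i <;> rcases j with j | j
  case inr.inr => simpa [dsumMatrix] using hρ.extend_apply x _ (i, j)
  all_goals
    rw [extend_apply']
    · simp [dsumMatrix]
    · simp [Fin.ext_iff]
      omega

end Skeleton

section SubRep

variable {P Q : GenRep K}

def SubRep.map (f : RepHom P Q) (N : SubRep P) : SubRep Q where
  carrier n := (N.carrier n).map (f.app n)
  stable φ := by
    rintro _ ⟨y, hy, rfl⟩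
    exact ⟨P.map φ y, N.stable φ y hy, LinearMap.congr_fun (f.natural φ) y⟩

def SubRep.comap (f : RepHom P Q) (M : SubRep Q) : SubRep P where
  carrier n := (M.carrier n).comap (f.app n)
  stable φ y hy := by
    rw [Submodule.mem_comap, ← LinearMap.comp_apply, f.natural]
    exact M.stable φ _ hy

def SubRep.ker (f : RepHom P Q) : SubRep P where
  carrier n := LinearMap.ker (f.app n)
  stable φ y hy := by
    rw [LinearMap.mem_ker, ← LinearMap.comp_apply, f.natural, LinearMap.comp_apply,
      LinearMap.mem_ker.1 hy, map_zero]

def SubRep.HasDegLE (N : SubRep P) (e : ℤ) : Prop :=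
  ∀ m n : ℕ, PolyDeg K e (fun x : Fin n × Fin m → K =>
    P.map ((Matrix.of fun i j => x (i, j)).mulVecLin) ∘ₗ (N.carrier m).subtype)

variable {e : ℤ}

lemma QuotDegLE.comap (f : RepHom P Q) {M : SubRep Q} (hM : QuotDegLE Q M e) :
    QuotDegLE P (M.comap f) e := by
  intro m n
  have hinj :
      LinearMap.ker (((M.carrier n).comap (f.app n)).mapQ (M.carrier n) (f.app n) le_rfl) = ⊥ := by
    rw [Submodule.ker_mapQ]
    exact Submodule.mkQ_map_self _
  obtain ⟨g, hg⟩ := LinearMap.exists_leftInverse_of_injective _ hinj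
  refine (((hM m n).comp_left g).comp_right (f.app m)).congr fun x => LinearMap.ext fun v => ?_
  simp only [LinearMap.comp_apply]
  rw [← LinearMap.comp_apply (Q.map _) (f.app m), ← f.natural]
  exact LinearMap.congr_fun hg (Submodule.Quotient.mk _)

lemma QuotDegLE.map_of_comp_eq_id {R : GenRep K} {α : RepHom P R} {β : RepHom R P}
    (hβα : ∀ n, β.app n ∘ₗ α.app n = LinearMap.id) {N : SubRep P} (hN : QuotDegLE P N e)
    (hker : (SubRep.ker β).HasDegLE e) : QuotDegLE R (N.map α) e := by
  intro m n
  have hπ : ∀ v, (LinearMap.id - α.app m ∘ₗ β.app m : R.obj m →ₗ[K] R.obj m) v ∈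
      LinearMap.ker (β.app m) := fun v => by
    simp [← LinearMap.comp_apply (β.app m) (α.app m), hβα]
  let π := LinearMap.codRestrict (LinearMap.ker (β.app m)) _ hπ
  let αbar := (N.carrier n).mapQ ((N.map α).carrier n) (α.app n)
    (Submodule.le_comap_map (α.app n) (N.carrier n))
  refine (((hN m n).comp_left αbar).comp_right (β.app m)).add
    (((hker m n).comp_left ((N.map α).carrier n).mkQ).comp_right π) |>.congr
    fun x => LinearMap.ext fun v => ?_
  change ((N.map α).carrier n).mkQ (α.app n _) + ((N.map α).carrier n).mkQ
    (R.map _ (v - α.app m (β.app m v))) = _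
  rw [← LinearMap.comp_apply (α.app n), α.natural, LinearMap.comp_apply, ← map_add, ← map_add,
    add_sub_cancel, LinearMap.comp_apply]

end SubRep

namespace GenRep

variable (P : GenRep K) (u : ℕ)

noncomputable def shiftIncl : RepHom P (P.shift u) where
  app n := P.map (incl K u n)
  natural φ := by
    change P.map (incl K u _) ∘ₗ P.map φ = P.map (dsum K u φ) ∘ₗ P.map (incl K u _)
    rw [← P.map_comp, ← P.map_comp, dsum_comp_incl]

noncomputable def shiftProj : RepHom (P.shift u) P where
  app n := P.map (projV K u n)
  natural φ := by
    change P.map (projV K u _) ∘ₗ P.map (dsum K u φ) = P.map φ ∘ₗ P.map (projV K u _)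
    rw [← P.map_comp, ← P.map_comp, projV_comp_dsum]

lemma shiftProj_comp_shiftIncl (n : ℕ) :
    (P.shiftProj u).app n ∘ₗ (P.shiftIncl u).app n = LinearMap.id := by
  change P.map _ ∘ₗ P.map _ = _
  rw [← P.map_comp, projV_comp_incl, P.map_id]

open Function in
lemma hasDegLE_ker_shiftProj {d : ℕ} (hd : P.HasDegLE d) :
    (SubRep.ker (P.shiftProj u)).HasDegLE (d - 1) := by
  intro m n
  have hρ : Injective (Prod.map (Fin.natAdd (m := n) u) (Fin.natAdd (m := m) u)) :=
    (Fin.natAdd_injective _ _).prodMap (Fin.natAdd_injective _ _)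
  refine ((PolyDeg.sub_extend_zero (hd (u + m) (u + n)) hρ
    (fun p => dsumMatrix u 1 0 p.1 p.2)).comp_right (LinearMap.ker _).subtype).congr fun x => ?_
  have h0 : (0 : Fin (u + n) × Fin (u + m) → K) = fun p => dsumMatrix u 0 0 p.1 p.2 := by
    funext p
    simp [dsumMatrix]
  rw [h0, of_extend_eq_dsumMatrix, of_extend_eq_dsumMatrix, mulVecLin_dsumMatrix_one,
    mulVecLin_dsumMatrix_zero]
  refine LinearMap.ext fun w => ?_
  have hw : P.map (projV K u m) w = 0 := w.2
  simp only [LinearMap.comp_apply, LinearMap.sub_apply, P.map_comp, Submodule.coe_subtype, hw,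
    map_zero, sub_zero]
  rfl

end GenRep

theorem stmt13_general (K : Type) [Field K] (P : GenRep K) (d : ℕ)
    (hd : P.IsDegree (d : ℤ)) (u : ℕ)
    (N : SubRep P) (hN : IsTopPart P ((d : ℤ) - 1) N)
    (M : SubRep (P.shift u)) (hM : IsTopPart (P.shift u) ((d : ℤ) - 1) M) :
    (∀ n : ℕ, Submodule.map (P.map (incl K u n)) (N.carrier n) = M.carrier n) ∧
    (∀ n : ℕ, P.map (projV K u n) ∘ₗ P.map (incl K u n) = LinearMap.id) ∧
    (∀ n : ℕ, IsCompl (LinearMap.range (P.map (incl K u n)))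
      (LinearMap.ker (P.map (projV K u n)))) ∧
    (∀ m n : ℕ, PolyDeg K ((d : ℤ) - 1) (fun x : Fin n × Fin m → K =>
      ((P.shift u).map ((Matrix.of fun i j => x (i, j)).mulVecLin)) ∘ₗ
        (LinearMap.ker (P.map (projV K u m))).subtype)) := by
  have hβα := P.shiftProj_comp_shiftIncl u
  have hker := P.hasDegLE_ker_shiftProj u hd.1
  refine ⟨fun n => le_antisymm ?_ ?_, hβα,
    fun n => LinearMap.isCompl_range_ker_of_comp_eq_id (hβα n), hker⟩
  · exact Submodule.map_le_iff_le_comap.2 (hN.2 _ (hM.1.comap (P.shiftIncl u)) n)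
  · exact hM.2 _ (hN.1.map_of_comp_eq_id hβα hker) n

/-- Shifting does not change the top part: for `P` of degree `d ≥ 0`, the morphism
`α = P(ι)` carries `P_{>d-1}` isomorphically onto `(Sh_U P)_{>d-1}`; moreover `Sh_U P`
decomposes as the direct sum of a copy of `P` (the image of `α`, with `β ∘ α = id` for
`β = P(π)`) and the kernel of `β`, which has degree at most `d - 1`. -/
theorem stmt13 (K : Type) [Field K] [Fintype K] (P : GenRep K) (d : ℕ)
    (hd : P.IsDegree (d : ℤ)) (u : ℕ)
    (N : SubRep P) (hN : IsTopPart P ((d : ℤ) - 1) N)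
    (M : SubRep (P.shift u)) (hM : IsTopPart (P.shift u) ((d : ℤ) - 1) M) :
    (∀ n : ℕ, Submodule.map (P.map (incl K u n)) (N.carrier n) = M.carrier n) ∧
    (∀ n : ℕ, P.map (projV K u n) ∘ₗ P.map (incl K u n) = LinearMap.id) ∧
    (∀ n : ℕ, IsCompl (LinearMap.range (P.map (incl K u n)))
      (LinearMap.ker (P.map (projV K u n)))) ∧
    (∀ m n : ℕ, PolyDeg K ((d : ℤ) - 1) (fun x : Fin n × Fin m → K =>
      ((P.shift u).map ((Matrix.of fun i j => x (i, j)).mulVecLin)) ∘ₗ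
        (LinearMap.ker (P.map (projV K u m))).subtype)) :=
  stmt13_general K P d hd u N hN M hM
end
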